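/- Let R be a Hermitian positive definite m×m complex matrix, let A : Fin p → Matrix (Fin m) (Fin m) ℂ be Hermitian matrices, and let W be an m×n complex matrix such that Wᴴ R W is invertible. Define the full-array FIM G_full by G_full i j = (trace (R⁻¹ * A i * R⁻¹ * A j)).re and the compressed FIM G_comp by G_comp i j = (trace ((Wᴴ R W)⁻¹ * (Wᴴ * A i * W) * (Wᴴ R W)⁻¹ * (Wᴴ * A j * W))).re. Then G_full − G_comp is positive semidefinite. -/

import Mathlib

open Matrix
open scoped ComplexOrder

private lemma trace_re_nonneg_of_posSemidef_mul
    {m : ℕ} (P Q M : Matrix (Fin m) (Fin m) ℂ)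
    (hP : P.PosSemidef) (hQ : Q.PosSemidef) (hM : M.IsHermitian) :
    0 ≤ ((P * M * Q * M).trace).re := by
  have hsq : ∀ Z : Matrix (Fin m) (Fin m) ℂ, Z.PosSemidef → ∃ B : Matrix (Fin m) (Fin m) ℂ,
      Z = Bᴴ * B := by
    intro Z hZ
    open scoped MatrixOrder in
    obtain ⟨X, hX, -, rfl⟩ := CFC.exists_sqrt_of_isSelfAdjoint_of_quasispectrumRestricts
      hZ.isHermitian (QuasispectrumRestricts.nnreal_of_nonneg hZ.nonneg)
    exact ⟨X, by rw [← Matrix.star_eq_conjTranspose, hX.star_eq]⟩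
  obtain ⟨B, rfl⟩ := hsq P hP
  obtain ⟨C, rfl⟩ := hsq Q hQ
  have h1 : Bᴴ * B * M * (Cᴴ * C) * M = Bᴴ * (B * M * Cᴴ * (C * M)) := by
    simp only [Matrix.mul_assoc]
  have h2 : (Bᴴ * B * M * (Cᴴ * C) * M).trace
      = ((B * M * Cᴴ)ᴴ * (B * M * Cᴴ)).trace := by
    rw [h1, Matrix.trace_mul_comm Bᴴ, Matrix.trace_mul_comm ((B * M * Cᴴ)ᴴ)]
    simp only [Matrix.conjTranspose_mul, Matrix.conjTranspose_conjTranspose, hM.eq,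
      Matrix.mul_assoc]
  rw [h2]
  set X := B * M * Cᴴ with hX
  have hXt : ((Xᴴ * X).trace).re = ∑ j, ∑ i, Complex.normSq (X i j) := by
    simp only [Matrix.trace, Matrix.diag, Matrix.mul_apply, Matrix.conjTranspose_apply,
      Complex.re_sum]
    refine Finset.sum_congr rfl fun j _ => Finset.sum_congr rfl fun i _ => ?_
    simp [Complex.normSq_apply, Complex.mul_re]
  rw [hXt]
  exact Finset.sum_nonneg fun j _ => Finset.sum_nonneg fun i _ => Complex.normSq_nonneg _

/-- **Compression loss in the Fisher information (Remark 3, Sec. IV-C).**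
For a Hermitian positive definite covariance `R`, Hermitian derivative
matrices `A i`, and a combiner `W` with `Wᴴ R W` invertible, the full-array
Slepian–Bangs FIM dominates the compressed FIM in the Löwner order. -/
theorem compressed_fim_dominated_by_full
    {m n p : ℕ} (R : Matrix (Fin m) (Fin m) ℂ) (hR : R.PosDef)
    (A : Fin p → Matrix (Fin m) (Fin m) ℂ)
    (hA : ∀ i, (A i).IsHermitian)
    (W : Matrix (Fin m) (Fin n) ℂ) (hW : IsUnit (Wᴴ * R * W)) :
    ((Matrix.of fun i j : Fin p =>
        ((R⁻¹ * A i * R⁻¹ * A j).trace).re)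
      - Matrix.of fun i j : Fin p =>
        (((Wᴴ * R * W)⁻¹ * (Wᴴ * A i * W) * (Wᴴ * R * W)⁻¹
            * (Wᴴ * A j * W)).trace).re).PosSemidef := by
  classical
  set S := Wᴴ * R * W with hS
  set Q := S⁻¹ with hQdef
  set T := W * Q * Wᴴ with hTdef
  set D := R⁻¹ - T with hDdef
  have hRdet : IsUnit R.det := hR.isUnit.map detMonoidHom
  have hSdet : IsUnit S.det := hW.map detMonoidHom
  have hRinv : R⁻¹ * R = 1 := Matrix.nonsing_inv_mul R hRdet
  have hRinv' : R * R⁻¹ = 1 := Matrix.mul_nonsing_inv R hRdet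
  have hQS : Q * S = 1 := Matrix.nonsing_inv_mul S hSdet
  -- Hermitian facts
  have hSH : S.IsHermitian := by
    rw [hS]
    simpa [Matrix.conjTranspose_mul, Matrix.mul_assoc, hR.isHermitian.eq]
      using (Matrix.isHermitian_conjTranspose_mul_mul W hR.isHermitian)
  have hQH : Q.IsHermitian := hSH.inv
  have hTH : T.IsHermitian := by
    rw [hTdef]
    have := Matrix.isHermitian_mul_mul_conjTranspose W hQH
    simpa [Matrix.mul_assoc] using this
  have hDH : D.IsHermitian := hR.isHermitian.inv.sub hTH
  -- T * R * T = T
  have hTRT : T * R * T = T := by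
    rw [hTdef]
    have : W * Q * Wᴴ * R * (W * Q * Wᴴ) = W * (Q * (Wᴴ * R * W) * Q) * Wᴴ := by
      simp only [Matrix.mul_assoc]
    rw [this, ← hS, hQS, Matrix.one_mul]
  have hTR : T * R * R⁻¹ = T := by rw [Matrix.mul_assoc, hRinv', Matrix.mul_one]
  -- D * R * D = D
  have hDRD : D * R * D = D := by
    rw [hDdef]
    simp only [Matrix.sub_mul, Matrix.mul_sub, hRinv, hTRT, hTR, Matrix.one_mul]
    abel
  -- positive semidefiniteness of D and T
  have hDpsd : D.PosSemidef := by
    have hD2 : D = Dᴴ * R * D := by rw [hDH.eq, hDRD]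
    rw [hD2]; exact hR.posSemidef.conjTranspose_mul_mul_same D
  have hTpsd : T.PosSemidef := by
    have hT2 : T = Tᴴ * R * T := by rw [hTH.eq, hTRT]
    rw [hT2]; exact hR.posSemidef.conjTranspose_mul_mul_same T
  -- entrywise decomposition
  have key : ∀ i j : Fin p,
      (R⁻¹ * A i * R⁻¹ * A j).trace
        - (Q * (Wᴴ * A i * W) * Q * (Wᴴ * A j * W)).trace
      = (D * A i * D * A j).trace + (D * A i * T * A j).trace
        + (T * A i * D * A j).trace := by
    intro i j
    have hT : (T * A i * T * A j).trace
        = (Q * (Wᴴ * A i * W) * Q * (Wᴴ * A j * W)).trace := by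
      rw [hTdef]
      rw [show W * Q * Wᴴ * A i * (W * Q * Wᴴ) * A j
          = W * (Q * (Wᴴ * A i * W) * Q * (Wᴴ * A j)) by
        simp only [Matrix.mul_assoc]]
      rw [Matrix.trace_mul_comm]
      simp only [Matrix.mul_assoc]
    have hRD : R⁻¹ = D + T := by rw [hDdef]; abel
    rw [← hT, hRD]
    simp only [Matrix.add_mul, Matrix.mul_add, Matrix.trace_add]
    abel
  have keyRe : ∀ i j : Fin p,
      ((R⁻¹ * A i * R⁻¹ * A j).trace).re
        - ((Q * (Wᴴ * A i * W) * Q * (Wᴴ * A j * W)).trace).re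
      = ((D * A i * D * A j).trace).re + ((D * A i * T * A j).trace).re
        + ((T * A i * D * A j).trace).re := by
    intro i j
    have := congrArg Complex.re (key i j)
    simpa [Complex.sub_re, Complex.add_re] using this
  refine PosSemidef.of_dotProduct_mulVec_nonneg ?_ ?_
  · -- Hermitian
    rw [Matrix.IsHermitian]
    ext i j
    simp only [Matrix.conjTranspose_apply, Matrix.sub_apply, Matrix.of_apply, star_trivial]
    have h1 : (R⁻¹ * A j * R⁻¹ * A i).trace = (R⁻¹ * A i * R⁻¹ * A j).trace := by
      rw [show R⁻¹ * A j * R⁻¹ * A i = (R⁻¹ * A j) * (R⁻¹ * A i) by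
        simp only [Matrix.mul_assoc], Matrix.trace_mul_comm]
      simp only [Matrix.mul_assoc]
    have h2 : (Q * (Wᴴ * A j * W) * Q * (Wᴴ * A i * W)).trace
        = (Q * (Wᴴ * A i * W) * Q * (Wᴴ * A j * W)).trace := by
      rw [show Q * (Wᴴ * A j * W) * Q * (Wᴴ * A i * W)
          = (Q * (Wᴴ * A j * W)) * (Q * (Wᴴ * A i * W)) by
        simp only [Matrix.mul_assoc], Matrix.trace_mul_comm]
      simp only [Matrix.mul_assoc]
    rw [h1, h2]
  · -- quadratic form
    intro x
    set M : Matrix (Fin m) (Fin m) ℂ := ∑ i, (x i : ℂ) • A i with hM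
    have hMH : M.IsHermitian := by
      rw [Matrix.IsHermitian, hM]
      simp only [Matrix.conjTranspose_sum, Matrix.conjTranspose_smul, Complex.star_def,
        Complex.conj_ofReal, (hA _).eq]
    have expand : ∀ P N : Matrix (Fin m) (Fin m) ℂ,
        ∑ i, ∑ j, x i * x j * ((P * A i * N * A j).trace).re
          = ((P * M * N * M).trace).re := by
      intro P N
      have h1 : P * M = ∑ i, (x i : ℂ) • (P * A i) := by
        rw [hM, Finset.mul_sum]
        exact Finset.sum_congr rfl fun i _ => Matrix.mul_smul ..
      have h2 : P * M * N = ∑ i, (x i : ℂ) • (P * A i * N) := by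
        rw [h1, Finset.sum_mul]
        exact Finset.sum_congr rfl fun i _ => Matrix.smul_mul ..
      have h3 : P * M * N * M
          = ∑ i, ∑ j, ((x i : ℂ) * (x j : ℂ)) • (P * A i * N * A j) := by
        rw [h2, Finset.sum_mul]
        refine Finset.sum_congr rfl fun i _ => ?_
        rw [Matrix.smul_mul, hM, Finset.mul_sum, Finset.smul_sum]
        refine Finset.sum_congr rfl fun j _ => ?_
        rw [Matrix.mul_smul, smul_smul]
      rw [h3]
      simp only [Matrix.trace_sum, Matrix.trace_smul, smul_eq_mul, Complex.re_sum,
        ← Complex.ofReal_mul, Complex.re_ofReal_mul]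
    have hdot : ∀ G : Matrix (Fin p) (Fin p) ℝ,
        star x ⬝ᵥ (G *ᵥ x) = ∑ i, ∑ j, x i * x j * G i j := by
      intro G
      simp only [dotProduct, Matrix.mulVec, Pi.star_apply, star_trivial,
        Finset.mul_sum]
      exact Finset.sum_congr rfl fun i _ => Finset.sum_congr rfl fun j _ => by ring
    rw [hdot]
    have hsum : ∑ i, ∑ j, x i * x j *
        (((Matrix.of fun i j : Fin p => ((R⁻¹ * A i * R⁻¹ * A j).trace).re)
          - Matrix.of fun i j : Fin p =>
            ((Q * (Wᴴ * A i * W) * Q * (Wᴴ * A j * W)).trace).re) i j)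
        = ((D * M * D * M).trace).re + ((D * M * T * M).trace).re
          + ((T * M * D * M).trace).re := by
      rw [← expand D D, ← expand D T, ← expand T D]
      rw [← Finset.sum_add_distrib, ← Finset.sum_add_distrib]
      refine Finset.sum_congr rfl fun i _ => ?_
      rw [← Finset.sum_add_distrib, ← Finset.sum_add_distrib]
      refine Finset.sum_congr rfl fun j _ => ?_
      simp only [Matrix.sub_apply, Matrix.of_apply]
      linear_combination x i * x j * keyRe i j
    rw [hsum]
    have t1 := trace_re_nonneg_of_posSemidef_mul D D M hDpsd hDpsd hMH
    have t2 := trace_re_nonneg_of_posSemidef_mul D T M hDpsd hTpsd hMH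
    have t3 := trace_re_nonneg_of_posSemidef_mul T D M hTpsd hDpsd hMH
    linarith
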